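/- arXiv:math/0305216 — 3 statements merged into one kernel-verified Lean document; each statement's English description precedes it below -/
import Mathlib

section
/- Let u : ℝ → ℂ be differentiable and let φ : ℝ → ℝ be three times differentiable with φ'(s) ≠ 0 for all s. Define ũ(s) = u(φ(s))·φ'(s) + (1/2)·φ''(s)/φ'(s), and set v = u² − u', ṽ = ũ² − ũ'. Then for all s ∈ ℝ, ṽ(s) = v(φ(s))·φ'(s)² − (1/2)·S(φ)(s). That is, the Miura transformation u ↦ u² − u' intertwines the transformation law of connections on Ω^{−1/2} with the transformation law of projective connections. -/
/-!
Both sides are local expressions in `u(φ s), u'(φ s), φ', φ'', φ'''`. The chain and quotient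
rules give `ũ' = u'(φ)·φ'² + u(φ)·φ'' + (1/2)(φ'''φ' − φ''²)/φ'²`; substituting this and `ũ` into
`ũ² − ũ'`, the cross terms `u(φ)·φ''` cancel and what remains is `(u² − u')(φ)·φ'²` together
with `−(1/2)(φ'''/φ' − (3/2)(φ''/φ')²)`.
-/

/-- The Schwarzian derivative `S(φ) = φ'''/φ' − (3/2)(φ''/φ')²`. -/
noncomputable def schwarzian (φ : ℝ → ℝ) : ℝ → ℝ := fun s =>
  deriv (deriv (deriv φ)) s / deriv φ s -
    (3 / 2) * (deriv (deriv φ) s / deriv φ s) ^ 2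

open Complex

theorem hasDerivAt_comp_mul_add_half_div {u : ℝ → ℂ} {φ φ₁ φ₂ : ℝ → ℝ} {s : ℝ} {u₁ : ℂ}
    {φ₃ : ℝ} (hu : HasDerivAt u u₁ (φ s)) (hφ : HasDerivAt φ (φ₁ s) s)
    (hφ₁ : HasDerivAt φ₁ (φ₂ s) s) (hφ₂ : HasDerivAt φ₂ φ₃ s) (hne : φ₁ s ≠ 0) :
    HasDerivAt (fun t => u (φ t) * (φ₁ t : ℂ) + 1 / 2 * ((φ₂ t : ℂ) / (φ₁ t : ℂ)))
      (u₁ * φ₁ s * φ₁ s + u (φ s) * φ₂ s +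
        1 / 2 * (((φ₃ : ℂ) * φ₁ s - φ₂ s * φ₂ s) / (φ₁ s : ℂ) ^ 2)) s := by
  have hcomp : HasDerivAt (fun t => u (φ t)) (u₁ * φ₁ s) s := by
    simpa [Complex.real_smul, mul_comm, Function.comp_def] using hu.scomp s hφ
  have hquot := hφ₂.ofReal_comp.div hφ₁.ofReal_comp (ofReal_ne_zero.mpr hne)
  exact (hcomp.mul hφ₁.ofReal_comp).add (hquot.const_mul (1 / 2))

theorem miura_identity (U U₁ a b c : ℂ) (ha : a ≠ 0) :
    (U * a + 1 / 2 * (b / a)) ^ 2 - (U₁ * a * a + U * b + 1 / 2 * ((c * a - b * b) / a ^ 2)) =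
      (U ^ 2 - U₁) * a ^ 2 - 1 / 2 * (c / a - 3 / 2 * (b / a) ^ 2) := by
  field_simp
  ring

theorem stmt_2_general (u : ℝ → ℂ) (φ : ℝ → ℝ)
    (hu : Differentiable ℝ u)
    (hφ' : Differentiable ℝ (deriv φ))
    (hφ'' : Differentiable ℝ (deriv (deriv φ)))
    (hφne : ∀ s : ℝ, deriv φ s ≠ 0)
    (ut v vt : ℝ → ℂ)
    (hut : ut = fun s => u (φ s) * Complex.ofReal (deriv φ s) +
      (1 / 2) * (Complex.ofReal (deriv (deriv φ) s) / Complex.ofReal (deriv φ s)))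
    (hv : v = fun t => u t ^ 2 - deriv u t)
    (hvt : vt = fun s => ut s ^ 2 - deriv ut s) :
    ∀ s : ℝ, vt s = v (φ s) * Complex.ofReal (deriv φ s) ^ 2 -
      (1 / 2) * Complex.ofReal (schwarzian φ s) := by
  intro s
  have hφ : DifferentiableAt ℝ φ s := differentiableAt_of_deriv_ne_zero (hφne s)
  have hderiv := hasDerivAt_comp_mul_add_half_div (hu (φ s)).hasDerivAt hφ.hasDerivAt
    (hφ' s).hasDerivAt (hφ'' s).hasDerivAt (hφne s)
  rw [← hut] at hderiv
  simp only [hvt, hv, hderiv.deriv, schwarzian, ofReal_sub, ofReal_div, ofReal_mul, ofReal_pow,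
    ofReal_ofNat]
  rw [hut]
  exact miura_identity _ _ _ _ _ (ofReal_ne_zero.mpr (hφne s))

/-- The Miura transformation `u ↦ v = u² − u'` intertwines the transformation law of
connections on `Ω^{−1/2}` with that of projective connections: if
`ũ(s) = u(φ(s))·φ'(s) + (1/2)·φ''(s)/φ'(s)`, then
`ṽ(s) = v(φ(s))·φ'(s)² − (1/2)·S(φ)(s)`. -/
theorem stmt_2 (u : ℝ → ℂ) (φ : ℝ → ℝ)
    (hu : Differentiable ℝ u)
    (hφ : Differentiable ℝ φ) (hφ' : Differentiable ℝ (deriv φ))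
    (hφ'' : Differentiable ℝ (deriv (deriv φ)))
    (hφne : ∀ s : ℝ, deriv φ s ≠ 0)
    (ut v vt : ℝ → ℂ)
    (hut : ut = fun s => u (φ s) * Complex.ofReal (deriv φ s) +
      (1 / 2) * (Complex.ofReal (deriv (deriv φ) s) / Complex.ofReal (deriv φ s)))
    (hv : v = fun t => u t ^ 2 - deriv u t)
    (hvt : vt = fun s => ut s ^ 2 - deriv ut s) :
    ∀ s : ℝ, vt s = v (φ s) * Complex.ofReal (deriv φ s) ^ 2 -
      (1 / 2) * Complex.ofReal (schwarzian φ s) :=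
  stmt_2_general u φ hu hφ' hφ'' hφne ut v vt hut hv hvt
end

section
/- Let I ⊆ ℝ be an open interval, v : I → ℂ a function, and u : I → ℂ a differentiable function satisfying the Riccati equation u² − u' = v on I. Let U : I → ℂ be any antiderivative of u (U' = u on I) and set ψ = exp(−U). Then ψ is nonvanishing, twice differentiable, and satisfies ψ'' = v·ψ on I. (This produces a point of the fiber of the Miura transformation: every solution of the Riccati equation v = u² − u' yields a nonvanishing solution of the second-order equation ψ'' = vψ.) -/
/-- Every solution `u` of the Riccati equation `u² − u' = v` on an open interval `I`
yields a nonvanishing solution `ψ = exp(−U)` (where `U' = u`) of `ψ'' = v·ψ` on `I`. -/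
theorem stmt_4 (a b : ℝ) (I : Set ℝ) (hI : I = Set.Ioo a b)
    (v u : ℝ → ℂ)
    (hu : ∀ t ∈ I, DifferentiableAt ℝ u t)
    (hric : ∀ t ∈ I, u t ^ 2 - deriv u t = v t)
    (U : ℝ → ℂ) (hU : ∀ t ∈ I, HasDerivAt U (u t) t)
    (ψ : ℝ → ℂ) (hψ : ψ = fun t => Complex.exp (-U t)) :
    (∀ t ∈ I, ψ t ≠ 0) ∧
      (∀ t ∈ I, DifferentiableAt ℝ ψ t) ∧
      (∀ t ∈ I, DifferentiableAt ℝ (deriv ψ) t) ∧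
      (∀ t ∈ I, deriv (deriv ψ) t = v t * ψ t) := by
  have hIopen : IsOpen I := hI ▸ isOpen_Ioo
  have hne : ∀ t ∈ I, ψ t ≠ 0 := by
    intro t ht; rw [hψ]; exact Complex.exp_ne_zero _
  have hψ' : ∀ t ∈ I, HasDerivAt ψ (-u t * ψ t) t := by
    intro t ht
    have h := ((hU t ht).neg).cexp
    rw [hψ]
    simpa [mul_comm] using h
  have hderiv_eq : ∀ t ∈ I, deriv ψ t = -u t * ψ t := fun t ht => (hψ' t ht).deriv
  have hderiv_eqon : ∀ t ∈ I, deriv ψ =ᶠ[nhds t] fun s => -u s * ψ s := by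
    intro t ht
    filter_upwards [hIopen.mem_nhds ht] with s hs using hderiv_eq s hs
  have hψ'' : ∀ t ∈ I, HasDerivAt (deriv ψ) (v t * ψ t) t := by
    intro t ht
    have h1 : HasDerivAt (fun s => -u s * ψ s)
        (-(deriv u t) * ψ t + -u t * (-u t * ψ t)) t :=
      (((hu t ht).hasDerivAt).neg).mul (hψ' t ht)
    have h2 : HasDerivAt (deriv ψ)
        (-(deriv u t) * ψ t + -u t * (-u t * ψ t)) t :=
      h1.congr_of_eventuallyEq (hderiv_eqon t ht)
    have : -(deriv u t) * ψ t + -u t * (-u t * ψ t) = v t * ψ t := by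
      rw [← hric t ht]; ring
    rwa [this] at h2
  exact ⟨hne, fun t ht => (hψ' t ht).differentiableAt,
    fun t ht => (hψ'' t ht).differentiableAt,
    fun t ht => (hψ'' t ht).deriv⟩
end

section
/- Let 𝔤 be a Lie algebra over ℂ equipped with a symmetric bilinear form κ : 𝔤 × 𝔤 → ℂ that is invariant, i.e., κ([x,y],z) = κ(x,[y,z]) for all x, y, z ∈ 𝔤. Then there exists a Lie algebra structure over ℂ on the vector space ĝ = (𝔤 ⊗_ℂ ℂ((t))) × ℂ such that for all A, B ∈ 𝔤, f, g ∈ ℂ((t)) and a, b ∈ ℂ: [(A ⊗ f, a), (B ⊗ g, b)] = ([A,B] ⊗ (f·g), −κ(A,B)·Res(f·g')). In particular the element K = (0, 1) is central. (This is the affine Kac-Moody algebra ĝ_κ associated to 𝔤 and κ.) -/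
/-!
The bracket is the current-algebra bracket `[x ⊗ f, y ⊗ g] = [x, y] ⊗ fg` on `𝔤 ⊗ ℂ((t))`,
centrally extended by `ω(x ⊗ f, y ⊗ g) = -κ(x, y) Res(f dg)`. Since `Res` kills derivatives,
`Res(f df) = Res(d(f²))/2 = 0` and `f d(gh) - fg dh + g d(fh) = d(fgh)`; together with the symmetry
and invariance of `κ` these make `ω` an alternating 2-cocycle, which is all a central extension
needs. The Leibniz rule for `d/dt` follows from that of the Euler operator `t d/dt`, which acts
diagonally on coefficients.
-/

open scoped TensorProduct

/-- The formal derivative of a Laurent series: `(f')ₙ = (n+1)·f_{n+1}`. -/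
noncomputable def lderiv (f : LaurentSeries ℂ) : LaurentSeries ℂ where
  coeff n := ((n + 1 : ℤ) : ℂ) * f.coeff (n + 1)
  isPWO_support' := by
    have hsub : (Function.support fun n : ℤ => ((n + 1 : ℤ) : ℂ) * f.coeff (n + 1)) ⊆
        (fun m : ℤ => m - 1) '' Function.support f.coeff := by
      intro n hn
      refine ⟨n + 1, ?_, by ring⟩
      intro h0
      simp [Function.mem_support, h0] at hn
    exact (f.isPWO_support'.image_of_monotone
      (fun x y hxy => by simpa using hxy : Monotone fun m : ℤ => m - 1)).mono hsub

/-- The residue of a Laurent series: the coefficient of `t⁻¹`. -/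
noncomputable def lres (f : LaurentSeries ℂ) : ℂ := f.coeff (-1)

namespace HahnSeries

variable {Γ R : Type*} [AddCommMonoid Γ] [PartialOrder Γ] [IsOrderedCancelAddMonoid Γ]
  [CommSemiring R]

-- Not inferred from `Algebra R R⟦Γ⟧`, whose scalar action (through power series) is not
-- reducibly the coefficientwise one.
instance : IsScalarTower R R⟦Γ⟧ R⟦Γ⟧ :=
  ⟨fun c f g => by simp only [smul_eq_mul, ← C_mul_eq_smul, mul_assoc]⟩

instance : SMulCommClass R R⟦Γ⟧ R⟦Γ⟧ :=
  ⟨fun c f g => by simp only [smul_eq_mul, ← C_mul_eq_smul, mul_left_comm]⟩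

end HahnSeries

namespace LaurentSeries

open HahnSeries

variable {R : Type*} [CommRing R]

theorem coeff_single_one_mul_derivative (f : R⸨X⸩) (n : ℤ) :
    (single 1 1 * derivative R f).coeff n = n • f.coeff n := by
  rw [← sub_add_cancel n 1, coeff_single_mul_add, one_mul, derivative_apply, hasseDeriv_coeff]
  simp

theorem single_one_mul_derivative_mul (f g : R⸨X⸩) :
    single 1 1 * derivative R (f * g) =
      single 1 1 * derivative R f * g + f * (single 1 1 * derivative R g) := by
  have hf : (single 1 1 * derivative R f).support ⊆ f.support := fun n hn h0 =>
    hn (by rw [coeff_single_one_mul_derivative, h0, smul_zero])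
  have hg : (single 1 1 * derivative R g).support ⊆ g.support := fun n hn h0 =>
    hn (by rw [coeff_single_one_mul_derivative, h0, smul_zero])
  ext n
  rw [coeff_add, coeff_single_one_mul_derivative, coeff_mul, coeff_mul_left' f.isPWO_support hf,
    coeff_mul_right' g.isPWO_support hg, Finset.smul_sum, ← Finset.sum_add_distrib]
  refine Finset.sum_congr rfl fun ij hij => ?_
  rw [← (Finset.mem_antidiagonal.mp hij).2.2, coeff_single_one_mul_derivative,
    coeff_single_one_mul_derivative, add_smul, smul_mul_assoc, mul_smul_comm]

theorem derivative_mul (f g : R⸨X⸩) :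
    derivative R (f * g) = derivative R f * g + f * derivative R g := by
  have hX : (single (-1) 1 * single 1 1 : R⸨X⸩) = 1 := by
    rw [single_mul_single, neg_add_cancel, mul_one, ← C_apply, C_one]
  linear_combination single (-1) 1 * single_one_mul_derivative_mul f g -
    (derivative R (f * g) - derivative R f * g - f * derivative R g) * hX

end LaurentSeries

namespace LinearMap

section ResiduePairing

variable {R A : Type*} [CommRing R] [CommRing A] [Module R A] [IsScalarTower R A A]
  [SMulCommClass R A A]

def residuePairing (D : A →ₗ[R] A) (res : A →ₗ[R] R) : A →ₗ[R] A →ₗ[R] R :=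
  ((LinearMap.mul R A).compl₂ D).compr₂ res

@[simp]
theorem residuePairing_apply (D : A →ₗ[R] A) (res : A →ₗ[R] R) (f g : A) :
    residuePairing D res f g = res (f * D g) :=
  rfl

variable {D : A →ₗ[R] A} {res : A →ₗ[R] R}

theorem isAlt_residuePairing [IsAddTorsionFree R] (hD : ∀ f g, D (f * g) = D f * g + f * D g)
    (hres : ∀ f, res (D f) = 0) : (residuePairing D res).IsAlt := fun f => by
  have : 2 • residuePairing D res f f = 0 := by
    rw [residuePairing_apply, ← map_nsmul, two_nsmul, ← hres (f * f), hD, mul_comm (D f)]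
  exact (nsmul_eq_zero_iff_right two_ne_zero).mp this

theorem residuePairing_apply_mul (hD : ∀ f g, D (f * g) = D f * g + f * D g)
    (hres : ∀ f, res (D f) = 0) (f g h : A) :
    residuePairing D res f (g * h) =
      residuePairing D res (f * g) h - residuePairing D res g (f * h) := by
  have : f * D (g * h) = f * g * D h - g * D (f * h) + D (f * g * h) := by
    simp only [hD]; ring
  simp only [residuePairing_apply, this, map_add, map_sub, hres, add_zero]

end ResiduePairing

section CentralExtension

variable {R M P : Type*} [CommRing R] [AddCommGroup M] [Module R M] [AddCommGroup P] [Module R P]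

/-- For `Ψ = β` this is the Leibniz form of the Jacobi identity; for `P = R` it says that `Ψ` is a
Lie algebra 2-cocycle with trivial coefficients. -/
def IsLeibniz (β : M →ₗ[R] M →ₗ[R] M) (Ψ : M →ₗ[R] M →ₗ[R] P) : Prop :=
  ∀ u v w, Ψ u (β v w) = Ψ (β u v) w + Ψ v (β u w)

variable (β : M →ₗ[R] M →ₗ[R] M) (ω : M →ₗ[R] M →ₗ[R] R)

def centralExtensionBracket : M × R →ₗ[R] M × R →ₗ[R] M × R :=
  LinearMap.mk₂ R (fun x y => (β x.1 y.1, ω x.1 y.1))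
    (fun _ _ _ => by simp) (fun _ _ _ => by simp) (fun _ _ _ => by simp) (fun _ _ _ => by simp)

@[simp]
theorem centralExtensionBracket_apply (x y : M × R) :
    centralExtensionBracket β ω x y = (β x.1 y.1, ω x.1 y.1) :=
  rfl

theorem centralExtensionBracket_zero_left (c : R) : centralExtensionBracket β ω (0, c) = 0 := by
  ext <;> simp

variable {β ω}

theorem isAlt_centralExtensionBracket (hβ : β.IsAlt) (hω : ω.IsAlt) :
    (centralExtensionBracket β ω).IsAlt := fun x => by
  simp [hβ x.1, hω x.1]

theorem isLeibniz_centralExtensionBracket (hβ : β.IsLeibniz β) (hω : β.IsLeibniz ω) :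
    (centralExtensionBracket β ω).IsLeibniz (centralExtensionBracket β ω) := fun x y z => by
  simp [hβ x.1 y.1 z.1, hω x.1 y.1 z.1]

end CentralExtension

end LinearMap

namespace TensorProduct

variable {R M N P : Type*} [CommRing R] [AddCommGroup M] [Module R M] [AddCommGroup N]
  [Module R N] [AddCommGroup P] [Module R P]

theorem isAlt_of_tmul {Ψ : M ⊗[R] N →ₗ[R] M ⊗[R] N →ₗ[R] P}
    (hskew : ∀ x f y g, Ψ (x ⊗ₜ f) (y ⊗ₜ g) = -Ψ (y ⊗ₜ g) (x ⊗ₜ f))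
    (hdiag : ∀ x f, Ψ (x ⊗ₜ f) (x ⊗ₜ f) = 0) : Ψ.IsAlt := by
  have hflip : Ψ = -Ψ.flip := ext' fun x f => ext' fun y g => hskew x f y g
  have skew (u v) : Ψ u v = -Ψ v u := by
    simpa using LinearMap.congr_fun₂ hflip u v
  intro u
  induction u using TensorProduct.induction_on with
  | zero => simp
  | tmul x f => exact hdiag x f
  | add u v hu hv =>
    simp only [map_add, LinearMap.add_apply, hu, hv, zero_add, add_zero]
    rw [skew v u, neg_add_cancel]

theorem isLeibniz_of_tmul {β : M ⊗[R] N →ₗ[R] M ⊗[R] N →ₗ[R] M ⊗[R] N}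
    {Ψ : M ⊗[R] N →ₗ[R] M ⊗[R] N →ₗ[R] P}
    (htmul : ∀ x f y g z h, Ψ (x ⊗ₜ f) (β (y ⊗ₜ g) (z ⊗ₜ h)) =
      Ψ (β (x ⊗ₜ f) (y ⊗ₜ g)) (z ⊗ₜ h) + Ψ (y ⊗ₜ g) (β (x ⊗ₜ f) (z ⊗ₜ h))) :
    β.IsLeibniz Ψ := by
  intro u v w
  induction u using TensorProduct.induction_on with
  | zero => simp
  | add u u' hu hu' => simp only [map_add, LinearMap.add_apply, hu, hu']; abel
  | tmul x f =>
    induction v using TensorProduct.induction_on with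
    | zero => simp
    | add v v' hv hv' => simp only [map_add, LinearMap.add_apply, hv, hv']; abel
    | tmul y g =>
      induction w using TensorProduct.induction_on with
      | zero => simp
      | add w w' hw hw' => simp only [map_add, hw, hw']; abel
      | tmul z h => exact htmul x f y g z h

end TensorProduct

namespace CurrentAlgebra

open TensorProduct

variable {R L A : Type*} [CommRing R] [LieRing L] [LieAlgebra R L] [CommRing A] [Module R A]

def cocycle (κ : L →ₗ[R] L →ₗ[R] R) (φ : A →ₗ[R] A →ₗ[R] R) : L ⊗[R] A →ₗ[R] L ⊗[R] A →ₗ[R] R :=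
  -LinearMap.BilinForm.tmul κ φ

variable {κ : L →ₗ[R] L →ₗ[R] R} {φ : A →ₗ[R] A →ₗ[R] R}

@[simp]
theorem cocycle_tmul (x y : L) (f g : A) :
    cocycle κ φ (x ⊗ₜ f) (y ⊗ₜ g) = -(κ x y * φ f g) := by
  simp [cocycle, mul_comm]

theorem isAlt_cocycle (hκ : ∀ x y, κ x y = κ y x) (hφ : φ.IsAlt) : (cocycle κ φ).IsAlt :=
  isAlt_of_tmul (fun x f y g => by rw [cocycle_tmul, cocycle_tmul, hκ, ← hφ.neg]; ring)
    (fun x f => by rw [cocycle_tmul, hφ, mul_zero, neg_zero])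

variable [IsScalarTower R A A] [SMulCommClass R A A]

variable (R L A) in
def bracket : L ⊗[R] A →ₗ[R] L ⊗[R] A →ₗ[R] L ⊗[R] A :=
  LinearMap.BilinMap.tmul (LieModule.toEnd R L L : L →ₗ[R] L →ₗ[R] L) (LinearMap.mul R A)

@[simp]
theorem bracket_tmul (x y : L) (f g : A) :
    bracket R L A (x ⊗ₜ f) (y ⊗ₜ g) = ⁅x, y⁆ ⊗ₜ (f * g) :=
  rfl

theorem isAlt_bracket : (bracket R L A).IsAlt :=
  isAlt_of_tmul (fun x f y g => by rw [bracket_tmul, bracket_tmul, ← lie_skew, neg_tmul, mul_comm])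
    (fun x f => by rw [bracket_tmul, lie_self, zero_tmul])

theorem isLeibniz_bracket : (bracket R L A).IsLeibniz (bracket R L A) :=
  isLeibniz_of_tmul fun x f y g z h => by
    simp only [bracket_tmul]
    rw [leibniz_lie, add_tmul, mul_assoc f g h, mul_left_comm g f]

theorem isLeibniz_cocycle (hκ : ∀ x y z, κ ⁅x, y⁆ z = κ x ⁅y, z⁆)
    (hφ : ∀ f g h, φ f (g * h) = φ (f * g) h - φ g (f * h)) :
    (bracket R L A).IsLeibniz (cocycle κ φ) :=
  isLeibniz_of_tmul fun x f y g z h => by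
    have hκ' : κ y ⁅x, z⁆ = -κ ⁅x, y⁆ z := by
      rw [← hκ, ← lie_skew, map_neg, LinearMap.neg_apply]
    rw [bracket_tmul, bracket_tmul, bracket_tmul, cocycle_tmul, cocycle_tmul, cocycle_tmul,
      ← hκ, hκ', hφ]
    ring

end CurrentAlgebra

theorem lderiv_eq_derivative (f : LaurentSeries ℂ) : lderiv f = LaurentSeries.derivative ℂ f := by
  ext n
  simp [lderiv]

/-- The affine Kac-Moody algebra: given a Lie algebra `𝔤` over `ℂ` with an invariant
symmetric bilinear form `κ`, the vector space `ĝ = (𝔤 ⊗ ℂ((t))) × ℂ` carries a Lie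
algebra structure (a bilinear alternating bracket satisfying the Jacobi/Leibniz
identity) with `[(A ⊗ f, a), (B ⊗ g, b)] = ([A,B] ⊗ fg, −κ(A,B)·Res(f·g'))`, and the
element `K = (0, 1)` is central. -/
theorem stmt_8 (𝔤 : Type) [LieRing 𝔤] [LieAlgebra ℂ 𝔤]
    (κ : 𝔤 →ₗ[ℂ] 𝔤 →ₗ[ℂ] ℂ)
    (hsym : ∀ x y : 𝔤, κ x y = κ y x)
    (hinv : ∀ x y z : 𝔤, κ ⁅x, y⁆ z = κ x ⁅y, z⁆) :
    ∃ B : ((𝔤 ⊗[ℂ] LaurentSeries ℂ) × ℂ) →ₗ[ℂ] ((𝔤 ⊗[ℂ] LaurentSeries ℂ) × ℂ) →ₗ[ℂ]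
        ((𝔤 ⊗[ℂ] LaurentSeries ℂ) × ℂ),
      (∀ x, B x x = 0) ∧
      (∀ x y z, B x (B y z) = B (B x y) z + B y (B x z)) ∧
      (∀ (A A' : 𝔤) (f g : LaurentSeries ℂ) (a b : ℂ),
        B (A ⊗ₜ[ℂ] f, a) (A' ⊗ₜ[ℂ] g, b) =
          (⁅A, A'⁆ ⊗ₜ[ℂ] (f * g), -(κ A A') * lres (f * lderiv g))) ∧
      (∀ x, B ((0 : 𝔤 ⊗[ℂ] LaurentSeries ℂ), (1 : ℂ)) x = 0) := by
  set φ := LinearMap.residuePairing (LaurentSeries.derivative ℂ) (HahnSeries.coeff.linearMap (-1))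
  have hD := LaurentSeries.derivative_mul (R := ℂ)
  have hres (f : LaurentSeries ℂ) : (LaurentSeries.derivative ℂ f).coeff (-1) = 0 := by simp
  refine ⟨LinearMap.centralExtensionBracket (CurrentAlgebra.bracket ℂ 𝔤 (LaurentSeries ℂ))
      (CurrentAlgebra.cocycle κ φ),
    LinearMap.isAlt_centralExtensionBracket CurrentAlgebra.isAlt_bracket
      (CurrentAlgebra.isAlt_cocycle hsym (LinearMap.isAlt_residuePairing hD hres)),
    LinearMap.isLeibniz_centralExtensionBracket CurrentAlgebra.isLeibniz_bracket
      (CurrentAlgebra.isLeibniz_cocycle hinv (LinearMap.residuePairing_apply_mul hD hres)),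
    fun A A' f g a b => ?_, fun x => by rw [LinearMap.centralExtensionBracket_zero_left]; rfl⟩
  simp [φ, lres, lderiv_eq_derivative]
end
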